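/- arXiv:2309.08330 — 4 statements merged into one kernel-verified Lean document; each statement's English description precedes it below -/
import Mathlib

section
/- Let F : T₁ → T₂ be a triangulated functor between triangulated categories admitting arbitrary small coproducts, and assume F has a right adjoint G. Then: (a) if G commutes with small coproducts, then F preserves compact objects; (b) if moreover T₁ is compactly generated and F preserves compact objects, then G commutes with small coproducts. -/
open CategoryTheory CategoryTheory.Limits CategoryTheory.Pretriangulated

universe v u

/-- The canonical map `⨁ᵢ Hom(A, B i) → Hom(A, ∐ B)` in a preadditive category,
sending a finitely supported family `(fᵢ)` to `∑ᵢ fᵢ ≫ ιᵢ`. -/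
noncomputable def homCoprodComparison {C : Type u} [Category.{v} C] [Preadditive C]
    {ι : Type v} (A : C) (B : ι → C) [HasCoproduct B] :
    (Π₀ i, (A ⟶ B i)) →+ (A ⟶ ∐ B) :=
  letI := Classical.decEq ι
  DFinsupp.sumAddHom fun i =>
    { toFun := fun f => f ≫ Sigma.ι B i
      map_zero' := by simp
      map_add' := fun f g => by simp [Preadditive.add_comp] }

/-- An object `A` is compact if for every small family `(B i)` the canonical map
`⨁ᵢ Hom(A, B i) → Hom(A, ∐ B)` is bijective. -/
def IsCompactObj {C : Type u} [Category.{v} C] [Preadditive C] (A : C) : Prop :=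
  ∀ ⦃ι : Type v⦄ (B : ι → C) [HasCoproduct B],
    Function.Bijective (homCoprodComparison A B)

/-!
Through the adjunction, `⨁ᵢ Hom(F A, Xᵢ) → Hom(F A, ∐ X)` is identified with the composite
of `⨁ᵢ Hom(A, G Xᵢ) → Hom(A, ∐ G Xᵢ)` and postcomposition with the comparison map
`μ : ∐ G Xᵢ ⟶ G (∐ X)`. So for compact `A`, the object `F A` is compact for `X` exactly
when `Hom(A, μ)` is bijective. This gives (a) at once. For (b), `Hom(A, μ)` is bijective for
every compact `A`, and compact objects are stable under shifts; the long exact `Hom`-sequence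
then kills all maps from compact objects to the cone of `μ`, which is therefore zero since
`T₁` is compactly generated.
-/

lemma homCoprodComparison_single {C : Type u} [Category.{v} C] [Preadditive C]
    {ι : Type v} [DecidableEq ι] (A : C) (B : ι → C) [HasCoproduct B] (i : ι)
    (f : A ⟶ B i) : homCoprodComparison A B (DFinsupp.single i f) = f ≫ Sigma.ι B i :=
  DFinsupp.sumAddHom_single _ _ _

section Adjunction

variable {C D : Type u} [Category.{v} C] [Category.{v} D] [Preadditive C] [Preadditive D]
  {F : C ⥤ D} [F.Additive] {G : D ⥤ C}

lemma homEquiv_homCoprodComparison (adj : F ⊣ G) {ι : Type v} (A : C) (X : ι → D)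
    [HasCoproduct X] [HasCoproduct fun i => G.obj (X i)] (d : Π₀ i, (F.obj A ⟶ X i)) :
    adj.homEquiv A (∐ X) (homCoprodComparison (F.obj A) X d) =
      homCoprodComparison A (fun i => G.obj (X i))
          (DFinsupp.mapRange.addEquiv (fun i => adj.homAddEquiv A (X i)) d) ≫
        sigmaComparison G X := by
  classical
  induction d using DFinsupp.induction with
  | h0 => simp
  | ha i f d _ _ ih =>
    simp only [map_add, Adjunction.homAddEquiv_add, ih, Preadditive.add_comp]
    simp [homCoprodComparison_single, Adjunction.homEquiv_naturality_right]

lemma bijective_homCoprodComparison_obj_iff (adj : F ⊣ G) {ι : Type v} (A : C) (X : ι → D)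
    [HasCoproduct X] [HasCoproduct fun i => G.obj (X i)]
    (hA : Function.Bijective (homCoprodComparison A fun i => G.obj (X i))) :
    Function.Bijective (homCoprodComparison (F.obj A) X) ↔
      Function.Bijective fun u : A ⟶ ∐ fun i => G.obj (X i) => u ≫ sigmaComparison G X := by
  have h : adj.homEquiv A (∐ X) ∘ homCoprodComparison (F.obj A) X =
      (fun u => u ≫ sigmaComparison G X) ∘ (homCoprodComparison A fun i => G.obj (X i)) ∘
        DFinsupp.mapRange.addEquiv (fun i => adj.homAddEquiv A (X i)) :=
    funext (homEquiv_homCoprodComparison adj A X)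
  rw [← Function.Bijective.of_comp_iff' (adj.homEquiv _ _).bijective, h,
    Function.Bijective.of_comp_iff _ (hA.comp (DFinsupp.mapRange.addEquiv _).bijective)]

end Adjunction

lemma IsCompactObj.shift {C : Type u} [Category.{v} C] [Preadditive C] [HasShift C ℤ]
    [∀ n : ℤ, (shiftFunctor C n).Additive] [HasCoproducts.{v} C] {A : C} (hA : IsCompactObj A)
    (n : ℤ) : IsCompactObj (A⟦n⟧) := fun _ B _ =>
  (bijective_homCoprodComparison_obj_iff (F := shiftFunctor C n) (G := shiftFunctor C (-n))
    (shiftEquiv C n).toAdjunction A B (hA _)).2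
    (asIso (sigmaComparison _ B)).homToEquiv.bijective

lemma injective_comp_shift_map {C : Type u} [Category.{v} C] [HasShift C ℤ] {X Y : C}
    (f : X ⟶ Y) (B : C) (n : ℤ) (hf : Function.Injective fun u : B⟦-n⟧ ⟶ X => u ≫ f) :
    Function.Injective fun u : B ⟶ X⟦n⟧ => u ≫ f⟦n⟧' := by
  let adj := (shiftEquiv' C (-n) n (by omega)).toAdjunction
  intro u v huv
  apply (adj.homEquiv B X).symm.injective
  apply hf
  exact (adj.homEquiv_naturality_right_symm u f).symm.trans
    ((congrArg (adj.homEquiv B Y).symm huv).trans (adj.homEquiv_naturality_right_symm v f))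

lemma isIso_of_bijective_comp {C : Type u} [Category.{v} C] [HasZeroObject C] [Preadditive C]
    [HasShift C ℤ] [∀ n : ℤ, (shiftFunctor C n).Additive] [Pretriangulated C]
    (P : C → Prop) (hP : ∀ B, P B → ∀ n : ℤ, P (B⟦n⟧))
    (hZ : ∀ Z, (∀ B, P B → ∀ g : B ⟶ Z, g = 0) → IsZero Z) {X Y : C} (f : X ⟶ Y)
    (hf : ∀ B, P B → Function.Bijective fun u : B ⟶ X => u ≫ f) : IsIso f := by
  obtain ⟨Z, p, q, hT⟩ := distinguished_cocone_triangle f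
  refine (Triangle.isZero₃_iff_isIso₁ _ hT).1 (hZ Z fun B hB g => ?_)
  have hqf : q ≫ f⟦1⟧' = 0 := comp_distTriang_mor_zero₃₁ _ hT
  have hq : g ≫ q = 0 := injective_comp_shift_map f B 1 (hf _ (hP B hB _)).injective <| by
    simp [hqf]
  obtain ⟨w, rfl⟩ := Triangle.coyoneda_exact₃ _ hT g hq
  obtain ⟨w, rfl⟩ := (hf B hB).surjective w
  have hfp : f ≫ p = 0 := comp_distTriang_mor_zero₁₂ _ hT
  change (w ≫ f) ≫ p = 0
  rw [Category.assoc, hfp, comp_zero]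

theorem stmt1 {T₁ T₂ : Type u} [Category.{v} T₁] [Category.{v} T₂]
    [HasZeroObject T₁] [HasZeroObject T₂] [Preadditive T₁] [Preadditive T₂]
    [HasShift T₁ ℤ] [HasShift T₂ ℤ]
    [∀ n : ℤ, (shiftFunctor T₁ n).Additive] [∀ n : ℤ, (shiftFunctor T₂ n).Additive]
    [Pretriangulated T₁] [Pretriangulated T₂] [IsTriangulated T₁] [IsTriangulated T₂]
    [HasCoproducts.{v} T₁] [HasCoproducts.{v} T₂]
    (F : T₁ ⥤ T₂) [F.Additive] [F.CommShift ℤ] [F.IsTriangulated]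
    (G : T₂ ⥤ T₁) (adj : F ⊣ G) :
    -- (a) if `G` commutes with small coproducts, then `F` preserves compact objects
    ((∀ ⦃ι : Type v⦄ (X : ι → T₂),
        IsIso (Sigma.desc (fun i => G.map (Sigma.ι X i)) :
          (∐ fun i => G.obj (X i)) ⟶ G.obj (∐ X))) →
      ∀ A : T₁, IsCompactObj A → IsCompactObj (F.obj A)) ∧
    -- (b) if moreover `T₁` is compactly generated and `F` preserves compact objects,
    -- then `G` commutes with small coproducts
    ((∃ S : Set T₁, (∀ A ∈ S, IsCompactObj A) ∧
        ∀ B : T₁, (∀ A ∈ S, ∀ i : ℤ, ∀ f : A ⟶ B⟦i⟧, f = 0) → IsZero B) →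
      (∀ A : T₁, IsCompactObj A → IsCompactObj (F.obj A)) →
      ∀ ⦃ι : Type v⦄ (X : ι → T₂),
        IsIso (Sigma.desc (fun i => G.map (Sigma.ι X i)) :
          (∐ fun i => G.obj (X i)) ⟶ G.obj (∐ X))) := by
  constructor
  · intro hG A hA ι X _
    have : IsIso (sigmaComparison G X) := hG X
    exact (bijective_homCoprodComparison_obj_iff adj A X (hA _)).2
      (asIso (sigmaComparison G X)).homToEquiv.bijective
  · rintro ⟨S, hSc, hSg⟩ hF ι X
    refine isIso_of_bijective_comp IsCompactObj (fun B hB n => hB.shift n) (fun Z hZ => ?_)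
      (sigmaComparison G X) fun B hB => (bijective_homCoprodComparison_obj_iff adj B X (hB _)).1
        (hF B hB X)
    refine hSg Z fun A hA i g => ?_
    let adj' : shiftFunctor T₁ (-i) ⊣ shiftFunctor T₁ i :=
      (shiftEquiv' T₁ (-i) i (by omega)).toAdjunction
    rw [← (adj'.homEquiv A Z).apply_symm_apply g,
      hZ _ ((hSc A hA).shift (-i)) ((adj'.homEquiv A Z).symm g)]
    exact Adjunction.homAddEquiv_zero adj' A Z
end

section
/- Let T be a triangulated category and let A and B be strictly full triangulated subcategories of T whose inclusion functors admit right adjoints. Assume that Hom(b, a) = 0 for all a ∈ A and b ∈ B, and that every object X of T satisfying Hom(a, X) = 0 and Hom(b, X) = 0 for all a ∈ A and b ∈ B is a zero object. Then T admits the semi-orthogonal decomposition T = ⟨A, B⟩: every object X of T fits into a distinguished triangle X_B → X → X_A → X_B⟦1⟧ with X_A ∈ A and X_B ∈ B. -/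
/-!
If the inclusion of a shift-stable subcategory `R` has a right adjoint, the counit `R_X ⟶ X`
induces bijections on `Hom(b, -)` for `b ∈ R`; completing it to a triangle `R_X ⟶ X ⟶ Z`,
the long exact `Hom(b, -)` sequence puts `Z` in the right orthogonal `R⊥`.
Do this for `Q` at `X` and then for `P` at the resulting cone `C`, giving `A ⟶ C ⟶ D`.
Then `D ∈ P⊥`, and `D ∈ Q⊥` because `Q⊥` is triangulated and contains `A ∈ P ⊆ Q⊥` and `C`.
Hence `D = 0`, so `C ≅ A` lies in `P`.
-/

open CategoryTheory CategoryTheory.Limits CategoryTheory.Pretriangulated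

universe v u

namespace CategoryTheory

variable {C : Type u} [Category.{v} C] [Preadditive C] [HasShift C ℤ]
  [∀ n : ℤ, (shiftFunctor C n).Additive]

lemma eq_zero_of_comp_shift_map_eq_zero {b X Y : C} {φ : X ⟶ Y} (n : ℤ)
    (hφ : ∀ w : b⟦-n⟧ ⟶ X, w ≫ φ = 0 → w = 0) {w : b ⟶ X⟦n⟧} (hw : w ≫ φ⟦n⟧' = 0) :
    w = 0 := by
  let e := (shiftFunctorCompIsoId C n (-n) (add_neg_cancel n)).app X
  have : (w⟦-n⟧' ≫ e.hom) ≫ φ = 0 := by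
    have := (shiftFunctorCompIsoId C n (-n) (add_neg_cancel n)).hom.naturality φ
    simp only [Functor.comp_map, Functor.id_map] at this
    rw [Category.assoc, Iso.app_hom, ← this, ← Functor.map_comp_assoc, hw, Functor.map_zero,
      zero_comp]
  apply (shiftFunctor C (-n)).map_injective
  rw [Functor.map_zero, ← cancel_mono e.hom, hφ _ this, zero_comp]

end CategoryTheory

namespace CategoryTheory.ObjectProperty

variable {C : Type u} [Category.{v} C]

lemma exists_coreflection (R : ObjectProperty C) [R.ι.IsLeftAdjoint] (X : C) :
    ∃ (B : C) (ε : B ⟶ X), R B ∧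
      ∀ ⦃b : C⦄, R b → Function.Bijective (fun w : b ⟶ B ↦ w ≫ ε) := by
  let adj := Adjunction.ofIsLeftAdjoint R.ι
  refine ⟨_, adj.counit.app X, (R.ι.rightAdjoint.obj X).property, fun b hb ↦ ?_⟩
  have : (fun w : b ⟶ _ ↦ w ≫ adj.counit.app X) =
      (adj.homEquiv ⟨b, hb⟩ X).symm ∘ (R.fullyFaithfulι.homEquiv).symm := by
    funext w
    rw [Function.comp_apply, Adjunction.homEquiv_counit]
    rfl
  rw [this]
  exact ((R.fullyFaithfulι.homEquiv).symm.trans (adj.homEquiv _ X).symm).bijective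

variable [HasZeroObject C] [Preadditive C] [HasShift C ℤ] [∀ n : ℤ, (shiftFunctor C n).Additive]
  [Pretriangulated C] (R : ObjectProperty C) [R.IsStableUnderShift ℤ]

lemma rightOrthogonal_obj₃_of_bijective {Tr : Triangle C} (hTr : Tr ∈ distTriang C)
    (h : ∀ ⦃b : C⦄, R b → Function.Bijective (fun w : b ⟶ Tr.obj₁ ↦ w ≫ Tr.mor₁)) :
    R.rightOrthogonal Tr.obj₃ := by
  intro b f hb
  have hf : f ≫ Tr.mor₃ = 0 := by
    refine eq_zero_of_comp_shift_map_eq_zero (φ := Tr.mor₁) 1 (fun w hw ↦ ?_)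
      (by rw [Category.assoc, comp_distTriang_mor_zero₃₁ _ hTr, comp_zero])
    exact (h (R.le_shift (-1) _ hb)).injective (hw.trans zero_comp.symm)
  obtain ⟨v, rfl⟩ := Triangle.coyoneda_exact₃ _ hTr f hf
  obtain ⟨u, rfl⟩ := (h hb).surjective v
  simp only [Category.assoc, comp_distTriang_mor_zero₁₂ _ hTr, comp_zero]

lemma exists_distTriang_rightOrthogonal [R.ι.IsLeftAdjoint] (X : C) :
    ∃ (B Z : C) (f : B ⟶ X) (g : X ⟶ Z) (h : Z ⟶ B⟦(1 : ℤ)⟧),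
      R B ∧ R.rightOrthogonal Z ∧ Triangle.mk f g h ∈ distTriang C := by
  obtain ⟨B, ε, hB, hε⟩ := R.exists_coreflection X
  obtain ⟨Z, g, h, hT⟩ := distinguished_cocone_triangle ε
  exact ⟨B, Z, ε, g, h, hB, R.rightOrthogonal_obj₃_of_bijective hT hε, hT⟩

end CategoryTheory.ObjectProperty

theorem stmt5 {T : Type u} [Category.{v} T]
    [HasZeroObject T] [Preadditive T] [HasShift T ℤ]
    [∀ n : ℤ, (shiftFunctor T n).Additive] [Pretriangulated T] [IsTriangulated T]
    (P Q : T → Prop)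
    -- `P` and `Q` define strictly full triangulated subcategories:
    (hPiso : ∀ {X Y : T}, (X ≅ Y) → P X → P Y)
    (hPshift : ∀ (X : T) (n : ℤ), P X → P (X⟦n⟧))
    (hPcone : ∀ (Tr : Triangle T), Tr ∈ (distTriang T) → P Tr.obj₁ → P Tr.obj₂ → P Tr.obj₃)
    (hQiso : ∀ {X Y : T}, (X ≅ Y) → Q X → Q Y)
    (hQshift : ∀ (X : T) (n : ℤ), Q X → Q (X⟦n⟧))
    (hQcone : ∀ (Tr : Triangle T), Tr ∈ (distTriang T) → Q Tr.obj₁ → Q Tr.obj₂ → Q Tr.obj₃)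
    -- the inclusion functors admit right adjoints
    (hPadj : (ObjectProperty.ι P).IsLeftAdjoint)
    (hQadj : (ObjectProperty.ι Q).IsLeftAdjoint)
    -- `Hom(b, a) = 0` for all `a ∈ P` and `b ∈ Q`
    (horth : ∀ (a b : T), P a → Q b → ∀ f : b ⟶ a, f = 0)
    -- joint generation: an object right orthogonal to both `P` and `Q` is zero
    (hgen : ∀ X : T, (∀ a : T, P a → ∀ f : a ⟶ X, f = 0) →
      (∀ b : T, Q b → ∀ f : b ⟶ X, f = 0) → IsZero X) :
    -- conclusion: every object fits into a distinguished triangle `X_B ⟶ X ⟶ X_A ⟶ X_B⟦1⟧`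
    ∀ X : T, ∃ (XA XB : T) (f : XB ⟶ X) (g : X ⟶ XA) (h : XA ⟶ XB⟦(1 : ℤ)⟧),
      P XA ∧ Q XB ∧ Triangle.mk f g h ∈ distTriang T := by
  have : ObjectProperty.IsStableUnderShift P ℤ := ⟨fun n ↦ ⟨fun X hX ↦ hPshift X n hX⟩⟩
  have : ObjectProperty.IsStableUnderShift Q ℤ := ⟨fun n ↦ ⟨fun X hX ↦ hQshift X n hX⟩⟩
  intro X
  obtain ⟨XB, C, f, g, h, hXB, hC, hT⟩ := ObjectProperty.exists_distTriang_rightOrthogonal Q X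
  obtain ⟨A, D, f', g', h', hA, hDP, hT'⟩ := ObjectProperty.exists_distTriang_rightOrthogonal P C
  have hDQ : ObjectProperty.rightOrthogonal Q D :=
    (ObjectProperty.rightOrthogonal Q).ext_of_isTriangulatedClosed₃ _ hT'
      (fun b f hb ↦ horth _ _ hA hb f) hC
  have : IsIso f' := (Triangle.isZero₃_iff_isIso₁ _ hT').1
    (hgen D (fun a ha f ↦ hDP f ha) (fun b hb f ↦ hDQ f hb))
  exact ⟨C, XB, f, g, h, hPiso (asIso f') hA, hXB, hT⟩
end

section
/- Let α : B → A be a homomorphism of commutative rings, let n ≥ 1 and d ≥ 1 be integers, and let F_B : ℤ → Ideal(B) and F_A : ℤ → Ideal(A) be length-n multiplicative filtrations by ideals, i.e. F(i) is the unit ideal for i ≥ 0, F(i) ⊆ F(i+1) for all i, F(i)·F(j) ⊆ F(i+j) for all i, j, and F(−n) = 0; assume that α maps F_B(i) into F_A(i) for all i ∈ ℤ. Let I_B ⊆ B and I_A ⊆ A be ideals with I_B^d ⊆ F_B(−1), I_A^d ⊆ F_A(−1), and such that α maps I_B into I_A. Then there exist length-dn multiplicative filtrations by ideals G_B : ℤ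 → Ideal(B) and G_A : ℤ → Ideal(A) (satisfying the same axioms with dn in place of n) such that G_B(d·i) = F_B(i) and G_A(d·i) = F_A(i) for all i ∈ ℤ, and α maps G_B(i) into G_A(i) for all i ∈ ℤ. Moreover, if additionally F_B(−1) ⊆ I_B and F_A(−1) ⊆ I_A, then G_B and G_A can be chosen so that G_B(−1) = I_B and G_A(−1) = I_A. -/
/-- A length-`n` multiplicative filtration by ideals on a commutative ring `R`:
`F i` is the unit ideal for `i ≥ 0`, the filtration is ascending and multiplicative,
and `F (-n) = 0`. -/
def IsIdealFiltration {R : Type*} [CommRing R] (n : ℕ) (F : ℤ → Ideal R) : Prop :=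
  (∀ i : ℤ, 0 ≤ i → F i = ⊤) ∧ (∀ i : ℤ, F i ≤ F (i + 1)) ∧
    (∀ i j : ℤ, F i * F j ≤ F (i + j)) ∧ F (-(n : ℤ)) = ⊥

/-!
Given `I` with `I ^ d ≤ F (-1)`, put `I ^ a * F j` in degree `d * j - a` and let `G i` be the sum of
all such products of degree at most `i`. This is visibly an ascending multiplicative filtration,
and it is compatible with any ring map carrying `I` and `F` into their counterparts. Writing
`a = d * q + r` with `r < d`, the hypothesis on `I` absorbs `I ^ (d * q)` into `F (-q)`, so
`I ^ a * F j ≤ F (j - q)`; this shows `G (d * k) = F k`, and in particular `G (-(d * n)) = 0`.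
If moreover `F (-1) ≤ I`, then `G (-1) = I`, since every product of degree `≤ -1` either involves
`I` or is some `F j` with `j ≤ -1`.
-/

section Refinement

variable {R : Type*} [CommRing R] {n d : ℕ} {I : Ideal R} {F : ℤ → Ideal R}

namespace IsIdealFiltration

theorem monotone (hF : IsIdealFiltration n F) : Monotone F :=
  monotone_int_of_le_succ hF.2.1

theorem pow_neg_one_mul_le (hF : IsIdealFiltration n F) (q : ℕ) (j : ℤ) :
    F (-1) ^ q * F j ≤ F (j - q) := by
  induction q with
  | zero => simp
  | succ q ih =>
    calc F (-1) ^ (q + 1) * F j = F (-1) * (F (-1) ^ q * F j) := by ring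
      _ ≤ F (-1) * F (j - q) := Ideal.mul_mono_right ih
      _ ≤ F (-1 + (j - q)) := hF.2.2.1 _ _
      _ = F (j - (q + 1 : ℕ)) := by congr 1; push_cast; ring

theorem pow_mul_le_of_le (hF : IsIdealFiltration n F) (hd : 0 < d) (hI : I ^ d ≤ F (-1))
    {a : ℕ} {j k : ℤ} (h : d * j - a ≤ d * k) : I ^ a * F j ≤ F k := by
  have hjk : j - (a / d : ℕ) ≤ k := by
    have hdiv : (d : ℤ) * (a / d : ℕ) + (a % d : ℕ) = a := by exact_mod_cast Nat.div_add_mod a d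
    have hmod : ((a % d : ℕ) : ℤ) < d := by exact_mod_cast Nat.mod_lt a hd
    by_contra! hlt
    nlinarith
  calc I ^ a * F j = I ^ (a % d) * ((I ^ d) ^ (a / d) * F j) := by
        rw [← pow_mul, mul_left_comm, ← mul_assoc, ← pow_add, Nat.div_add_mod]
    _ ≤ I ^ (a % d) * (F (-1) ^ (a / d) * F j) := by gcongr
    _ ≤ I ^ (a % d) * F (j - (a / d : ℕ)) := Ideal.mul_mono_right (hF.pow_neg_one_mul_le _ _)
    _ ≤ F (j - (a / d : ℕ)) := Ideal.mul_le_right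
    _ ≤ F k := hF.monotone hjk

end IsIdealFiltration

variable (d I F) in
def refinement (i : ℤ) : Ideal R :=
  ⨆ (a : ℕ) (j : ℤ) (_ : (d : ℤ) * j - a ≤ i), I ^ a * F j

theorem pow_mul_le_refinement {a : ℕ} {j i : ℤ} (h : (d : ℤ) * j - a ≤ i) :
    I ^ a * F j ≤ refinement d I F i :=
  le_iSup_of_le a <| le_iSup_of_le j <| le_iSup_of_le h le_rfl

theorem refinement_le {i : ℤ} {J : Ideal R}
    (h : ∀ (a : ℕ) (j : ℤ), (d : ℤ) * j - a ≤ i → I ^ a * F j ≤ J) :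
    refinement d I F i ≤ J :=
  iSup_le fun a => iSup_le fun j => iSup_le (h a j)

theorem refinement_mono : Monotone (refinement d I F) := fun _ _ hik =>
  refinement_le fun _ _ h => pow_mul_le_refinement (h.trans hik)

theorem refinement_mul_le (hF : ∀ i j, F i * F j ≤ F (i + j)) (i k : ℤ) :
    refinement d I F i * refinement d I F k ≤ refinement d I F (i + k) := by
  simp only [refinement, Submodule.iSup_mul, Submodule.mul_iSup]
  refine iSup_le fun b => iSup_le fun l => iSup_le fun hl => ?_
  refine iSup_le fun a => iSup_le fun j => iSup_le fun hj => ?_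
  calc I ^ a * F j * (I ^ b * F l) = I ^ (a + b) * (F j * F l) := by ring
    _ ≤ I ^ (a + b) * F (j + l) := Ideal.mul_mono_right (hF j l)
    _ ≤ refinement d I F (i + k) := pow_mul_le_refinement (by push_cast; linarith)

theorem refinement_le_of_le (hF : IsIdealFiltration n F) (hd : 0 < d) (hI : I ^ d ≤ F (-1))
    {i k : ℤ} (h : i ≤ d * k) : refinement d I F i ≤ F k :=
  refinement_le fun _ _ hj => hF.pow_mul_le_of_le hd hI (hj.trans h)

theorem refinement_mul_eq (hF : IsIdealFiltration n F) (hd : 0 < d) (hI : I ^ d ≤ F (-1))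
    (k : ℤ) : refinement d I F (d * k) = F k :=
  le_antisymm (refinement_le_of_le hF hd hI le_rfl)
    (by simpa using pow_mul_le_refinement (I := I) (F := F) (a := 0) (j := k) (by simp))

theorem isIdealFiltration_refinement (hF : IsIdealFiltration n F) (hd : 0 < d)
    (hI : I ^ d ≤ F (-1)) : IsIdealFiltration (d * n) (refinement d I F) := by
  refine ⟨fun i hi => ?_, fun i => refinement_mono (Int.le_add_one le_rfl),
    refinement_mul_le hF.2.2.1, ?_⟩
  · rw [eq_top_iff, ← hF.1 0 le_rfl, ← refinement_mul_eq hF hd hI 0]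
    exact refinement_mono (by simpa using hi)
  · rw [eq_bot_iff, ← hF.2.2.2]
    exact refinement_le_of_le hF hd hI (by push_cast; linarith)

theorem refinement_neg_one (hF : IsIdealFiltration n F) (hFI : F (-1) ≤ I) :
    refinement d I F (-1) = I := by
  refine le_antisymm (refinement_le fun a j h => ?_) ?_
  · rcases Nat.eq_zero_or_pos a with rfl | ha
    · have hj : j ≤ -1 := by
        by_contra! hj
        push_cast at h
        nlinarith [Int.natCast_nonneg d]
      exact Ideal.mul_le_right.trans ((hF.monotone hj).trans hFI)
    · exact Ideal.mul_le_left.trans (Ideal.pow_le_self ha.ne')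
  · simpa [hF.1 0 le_rfl] using pow_mul_le_refinement (d := d) (I := I) (F := F) (a := 1)
      (j := 0) (by simp)

theorem refinement_le_comap {S : Type*} [CommRing S] (α : R →+* S) {I' : Ideal S}
    {F' : ℤ → Ideal S} (hI : I ≤ I'.comap α) (hF : ∀ j, F j ≤ (F' j).comap α) (i : ℤ) :
    refinement d I F i ≤ (refinement d I' F' i).comap α :=
  refinement_le fun a j h => Ideal.map_le_iff_le_comap.mp <| by
    rw [Ideal.map_mul, Ideal.map_pow]
    exact (Ideal.mul_mono (Ideal.pow_right_mono (Ideal.map_le_iff_le_comap.mpr hI) a)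
      (Ideal.map_le_iff_le_comap.mpr (hF j))).trans (pow_mul_le_refinement h)

end Refinement

theorem stmt8_general {B A : Type*} [CommRing B] [CommRing A] (α : B →+* A)
    (n d : ℕ) (hd : 1 ≤ d)
    (FB : ℤ → Ideal B) (FA : ℤ → Ideal A)
    (hFB : IsIdealFiltration n FB) (hFA : IsIdealFiltration n FA)
    (hα : ∀ (i : ℤ), ∀ x ∈ FB i, α x ∈ FA i)
    (IB : Ideal B) (IA : Ideal A)
    (hIB : IB ^ d ≤ FB (-1)) (hIA : IA ^ d ≤ FA (-1))
    (hαI : ∀ x ∈ IB, α x ∈ IA) :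
    (∃ (GB : ℤ → Ideal B) (GA : ℤ → Ideal A),
      IsIdealFiltration (d * n) GB ∧ IsIdealFiltration (d * n) GA ∧
      (∀ i : ℤ, GB ((d : ℤ) * i) = FB i) ∧ (∀ i : ℤ, GA ((d : ℤ) * i) = FA i) ∧
      (∀ (i : ℤ), ∀ x ∈ GB i, α x ∈ GA i)) ∧
    (FB (-1) ≤ IB → FA (-1) ≤ IA →
      ∃ (GB : ℤ → Ideal B) (GA : ℤ → Ideal A),
        IsIdealFiltration (d * n) GB ∧ IsIdealFiltration (d * n) GA ∧
        (∀ i : ℤ, GB ((d : ℤ) * i) = FB i) ∧ (∀ i : ℤ, GA ((d : ℤ) * i) = FA i) ∧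
        (∀ (i : ℤ), ∀ x ∈ GB i, α x ∈ GA i) ∧
        GB (-1) = IB ∧ GA (-1) = IA) := by
  have hGB := isIdealFiltration_refinement hFB hd hIB
  have hGA := isIdealFiltration_refinement hFA hd hIA
  have hmap : ∀ i, ∀ x ∈ refinement d IB FB i, α x ∈ refinement d IA FA i :=
    fun i _ hx => refinement_le_comap α hαI hα i hx
  exact ⟨⟨_, _, hGB, hGA, refinement_mul_eq hFB hd hIB, refinement_mul_eq hFA hd hIA, hmap⟩,
    fun hFIB hFIA => ⟨_, _, hGB, hGA, refinement_mul_eq hFB hd hIB, refinement_mul_eq hFA hd hIA,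
      hmap, refinement_neg_one hFB hFIB, refinement_neg_one hFA hFIA⟩⟩

theorem stmt8 {B A : Type*} [CommRing B] [CommRing A] (α : B →+* A)
    (n d : ℕ) (hn : 1 ≤ n) (hd : 1 ≤ d)
    (FB : ℤ → Ideal B) (FA : ℤ → Ideal A)
    (hFB : IsIdealFiltration n FB) (hFA : IsIdealFiltration n FA)
    (hα : ∀ (i : ℤ), ∀ x ∈ FB i, α x ∈ FA i)
    (IB : Ideal B) (IA : Ideal A)
    (hIB : IB ^ d ≤ FB (-1)) (hIA : IA ^ d ≤ FA (-1))
    (hαI : ∀ x ∈ IB, α x ∈ IA) :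
    (∃ (GB : ℤ → Ideal B) (GA : ℤ → Ideal A),
      IsIdealFiltration (d * n) GB ∧ IsIdealFiltration (d * n) GA ∧
      (∀ i : ℤ, GB ((d : ℤ) * i) = FB i) ∧ (∀ i : ℤ, GA ((d : ℤ) * i) = FA i) ∧
      (∀ (i : ℤ), ∀ x ∈ GB i, α x ∈ GA i)) ∧
    (FB (-1) ≤ IB → FA (-1) ≤ IA →
      ∃ (GB : ℤ → Ideal B) (GA : ℤ → Ideal A),
        IsIdealFiltration (d * n) GB ∧ IsIdealFiltration (d * n) GA ∧
        (∀ i : ℤ, GB ((d : ℤ) * i) = FB i) ∧ (∀ i : ℤ, GA ((d : ℤ) * i) = FA i) ∧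
        (∀ (i : ℤ), ∀ x ∈ GB i, α x ∈ GA i) ∧
        GB (-1) = IB ∧ GA (-1) = IA) :=
  stmt8_general α n d hd FB FA hFB hFA hα IB IA hIB hIA hαI
end

section
/- Let R be a commutative ring, let n ≥ 1 and d ≥ 1 be integers, let F : ℤ → Ideal(R) be a length-n multiplicative filtration by ideals (F(i) is the unit ideal for i ≥ 0, F(i) ⊆ F(i+1) for all i, F(i)·F(j) ⊆ F(i+j) for all i, j, and F(−n) = 0), and let I be an ideal of R with I^d ⊆ F(−1). Define G : ℤ → Ideal(R) by G(i) = R for i ≥ 0 and, for i < 0, writing i = j·d − r with the unique integers j ≤ 0 and 0 ≤ r < d, G(i) = F(j)·I^r + F(j−1). Then G is a length-dn multiplicative filtration by ideals (G(i) is the unit ideal for i ≥ 0, G is ascending, G(i)·G(j) ⊆ G(i+j) for all i, j, and G(−dn) = 0), and G(d·i) = F(i) for all i ∈ ℤ. Moreover, if F(−1) ⊆ I, then G(−1) = I. -/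
/-!
Write a negative index as `j * d - r` with `j ≤ 0` and `0 ≤ r < d`, so that `G (j * d - r)` is
`F j * I ^ r + F (j - 1)`. Within a block of `d` consecutive indices `G` grows by lowering the
power of `I`, and at a multiple of `d` it collapses to `F j` since `F (j - 1) ≤ F j`; hence `G`
is ascending and refines `F`. In a product of two such ideals, the main term lies in
`F (a + b) * I ^ (r + s)`, and once `r + s ≥ d` the factor `I ^ d ≤ F (-1)` carries it down to
`F (a + b - 1) * I ^ (r + s - d)`; the other terms lie in `F (a + b - 1) * I ^ r`,
`F (a + b - 1) * I ^ s` and `F (a + b - 2)`, which fit in either case.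
-/

lemma Int.exists_eq_mul_sub_of_neg {d i : ℤ} (hd : 0 < d) (hi : i < 0) :
    ∃ (j : ℤ) (r : ℕ), j ≤ 0 ∧ (r : ℤ) < d ∧ i = j * d - r := by
  obtain ⟨r, hr⟩ := Int.eq_ofNat_of_zero_le (Int.emod_nonneg (-i) hd.ne')
  refine ⟨-((-i) / d), r, by have := Int.ediv_nonneg (by omega : 0 ≤ -i) hd.le; omega,
    hr ▸ Int.emod_lt_of_pos _ hd, ?_⟩
  linear_combination Int.mul_ediv_add_emod (-i) d - hr

namespace Ideal

variable {R : Type*} [CommRing R]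

lemma add_mul_add_le {A B C D X : Ideal R} (hAC : A * C ≤ X) (hAD : A * D ≤ X)
    (hBC : B * C ≤ X) (hBD : B * D ≤ X) : (A + B) * (C + D) ≤ X := by
  rw [add_mul, mul_add, mul_add]
  exact sup_le (sup_le hAC hAD) (sup_le hBC hBD)

end Ideal

section Refinement

variable {R : Type*} [CommRing R] {F G : ℤ → Ideal R} {I : Ideal R} {d : ℕ}

/-- The value `G (j * d - r)` of the refinement, for `0 ≤ r < d`. -/
def refinementPiece (F : ℤ → Ideal R) (I : Ideal R) (j : ℤ) (r : ℕ) : Ideal R :=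
  F j * I ^ r + F (j - 1)

lemma filtration_mul_le_of_add_le (hFmono : Monotone F) (hFmul : ∀ i j, F i * F j ≤ F (i + j))
    {i j k : ℤ} (h : i + j ≤ k) : F i * F j ≤ F k :=
  (hFmul i j).trans (hFmono h)

lemma refinementPiece_zero (hFmono : Monotone F) (j : ℤ) : refinementPiece F I j 0 = F j := by
  rw [refinementPiece, pow_zero, mul_one]
  exact sup_eq_left.mpr (hFmono (by omega))

lemma refinementPiece_antitone (j : ℤ) : Antitone (refinementPiece F I j) := fun _ _ h =>
  sup_le_sup_right (Ideal.mul_mono_right (Ideal.pow_le_pow_right h)) _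

lemma refinementPiece_mul_le (hFmono : Monotone F) (hFmul : ∀ i j, F i * F j ≤ F (i + j))
    (a b : ℤ) (r s : ℕ) :
    refinementPiece F I a r * refinementPiece F I b s ≤ refinementPiece F I (a + b) (r + s) := by
  have hF : ∀ {i j k : ℤ}, i + j ≤ k → F i * F j ≤ F k := filtration_mul_le_of_add_le hFmono hFmul
  unfold refinementPiece
  apply Ideal.add_mul_add_le
  · rw [pow_add, mul_mul_mul_comm]
    exact le_sup_of_le_left (Ideal.mul_mono_left (hFmul a b))
  · rw [mul_right_comm]
    exact le_sup_of_le_right (Ideal.mul_le_left.trans (hF (by omega)))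
  · rw [← mul_assoc]
    exact le_sup_of_le_right (Ideal.mul_le_left.trans (hF (by omega)))
  · exact le_sup_of_le_right (hF (by omega))

lemma refinementPiece_mul_le_of_le_add (hFmono : Monotone F)
    (hFmul : ∀ i j, F i * F j ≤ F (i + j)) (hI : I ^ d ≤ F (-1)) (a b : ℤ) {r s : ℕ}
    (hr : r ≤ d) (hs : s ≤ d) (hrs : d ≤ r + s) :
    refinementPiece F I a r * refinementPiece F I b s ≤
      refinementPiece F I (a + b - 1) (r + s - d) := by
  have hF : ∀ {i j k : ℤ}, i + j ≤ k → F i * F j ≤ F k := filtration_mul_le_of_add_le hFmono hFmul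
  unfold refinementPiece
  apply Ideal.add_mul_add_le
  · have hpow : I ^ r * I ^ s = I ^ d * I ^ (r + s - d) := by
      rw [← pow_add, ← pow_add, Nat.add_sub_cancel' hrs]
    calc F a * I ^ r * (F b * I ^ s) = F a * F b * I ^ d * I ^ (r + s - d) := by
          rw [mul_mul_mul_comm, hpow, ← mul_assoc]
      _ ≤ F (a + b) * F (-1) * I ^ (r + s - d) :=
          Ideal.mul_mono_left (Ideal.mul_mono (hFmul a b) hI)
      _ ≤ F (a + b - 1) * I ^ (r + s - d) := Ideal.mul_mono_left (hF (by omega))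
      _ ≤ _ := le_sup_left
  · rw [mul_right_comm]
    exact le_sup_of_le_left (Ideal.mul_mono (hF (by omega)) (Ideal.pow_le_pow_right (by omega)))
  · rw [← mul_assoc]
    exact le_sup_of_le_left (Ideal.mul_mono (hF (by omega)) (Ideal.pow_le_pow_right (by omega)))
  · exact le_sup_of_le_right (hF (by omega))

lemma refinement_le_succ (hFmono : Monotone F) (hd : 0 < d)
    (hGtop : ∀ i : ℤ, 0 ≤ i → G i = ⊤)
    (hGneg : ∀ i : ℤ, i < 0 → ∀ (j : ℤ) (r : ℕ), j ≤ 0 → (r : ℤ) < d →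
      i = j * d - r → G i = refinementPiece F I j r) (i : ℤ) :
    G i ≤ G (i + 1) := by
  rcases le_or_gt 0 (i + 1) with h | h
  · rw [hGtop _ h]
    exact le_top
  obtain ⟨j, r, hj, hr, rfl⟩ := Int.exists_eq_mul_sub_of_neg (d := d) (by omega) (by omega : i < 0)
  rw [hGneg _ (by omega) j r hj hr rfl]
  rcases r with _ | r
  · have hj : j ≠ 0 := by
      rintro rfl
      simp at h
    rw [hGneg _ h (j + 1) (d - 1) (by omega) (by omega) (by push_cast [Nat.cast_sub hd]; ring),
      refinementPiece_zero hFmono]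
    exact le_sup_of_le_right (hFmono (by omega))
  · rw [hGneg _ h j r hj (by omega) (by push_cast; ring)]
    exact refinementPiece_antitone j r.le_succ

lemma refinement_mul_le_s9 (hFmono : Monotone F) (hFmul : ∀ i j, F i * F j ≤ F (i + j))
    (hI : I ^ d ≤ F (-1)) (hd : 0 < d) (hGtop : ∀ i : ℤ, 0 ≤ i → G i = ⊤)
    (hGneg : ∀ i : ℤ, i < 0 → ∀ (j : ℤ) (r : ℕ), j ≤ 0 → (r : ℤ) < d →
      i = j * d - r → G i = refinementPiece F I j r) (i j : ℤ) :
    G i * G j ≤ G (i + j) := by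
  have hGmono : Monotone G := monotone_int_of_le_succ (refinement_le_succ hFmono hd hGtop hGneg)
  rcases le_or_gt 0 i with hi | hi
  · rw [hGtop i hi, Ideal.top_mul]
    exact hGmono (by omega)
  rcases le_or_gt 0 j with hj | hj
  · rw [hGtop j hj, Ideal.mul_top]
    exact hGmono (by omega)
  obtain ⟨a, r, ha, hr, rfl⟩ := Int.exists_eq_mul_sub_of_neg (d := d) (by omega) hi
  obtain ⟨b, s, hb, hs, rfl⟩ := Int.exists_eq_mul_sub_of_neg (d := d) (by omega) hj
  rw [hGneg _ hi a r ha hr rfl, hGneg _ hj b s hb hs rfl]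
  rcases lt_or_ge (r + s) d with hrs | hrs
  · rw [hGneg _ (by omega) (a + b) (r + s) (by omega) (by omega) (by push_cast; ring)]
    exact refinementPiece_mul_le hFmono hFmul a b r s
  · rw [hGneg _ (by omega) (a + b - 1) (r + s - d) (by omega) (by omega)
      (by push_cast [Nat.cast_sub hrs]; ring)]
    exact refinementPiece_mul_le_of_le_add hFmono hFmul hI a b (by omega) (by omega) hrs

lemma refinement_natCast_mul (hFmono : Monotone F) (hFtop : ∀ i : ℤ, 0 ≤ i → F i = ⊤)
    (hd : 0 < d) (hGtop : ∀ i : ℤ, 0 ≤ i → G i = ⊤)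
    (hGneg : ∀ i : ℤ, i < 0 → ∀ (j : ℤ) (r : ℕ), j ≤ 0 → (r : ℤ) < d →
      i = j * d - r → G i = refinementPiece F I j r) (i : ℤ) :
    G (d * i) = F i := by
  rcases le_or_gt 0 i with hi | hi
  · rw [hGtop _ (by positivity), hFtop i hi]
  · rw [hGneg _ (mul_neg_of_pos_of_neg (by omega) hi) i 0 hi.le (by omega) (by push_cast; ring),
      refinementPiece_zero hFmono]

end Refinement

theorem stmt9_general {R : Type*} [CommRing R] (n d : ℕ) (hd : 1 ≤ d)
    (F : ℤ → Ideal R)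
    (hFtop : ∀ i : ℤ, 0 ≤ i → F i = ⊤)
    (hFmono : ∀ i : ℤ, F i ≤ F (i + 1))
    (hFmul : ∀ i j : ℤ, F i * F j ≤ F (i + j))
    (hFbot : F (-(n : ℤ)) = ⊥)
    (I : Ideal R) (hI : I ^ d ≤ F (-1))
    (G : ℤ → Ideal R)
    -- `G i = R` for `i ≥ 0`
    (hGtop : ∀ i : ℤ, 0 ≤ i → G i = ⊤)
    -- for `i < 0`, writing `i = j * d - r` with the unique `j ≤ 0` and `0 ≤ r < d`,
    -- we have `G i = F j * I ^ r + F (j - 1)`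
    (hGneg : ∀ i : ℤ, i < 0 → ∀ (j : ℤ) (r : ℕ), j ≤ 0 → (r : ℤ) < (d : ℤ) →
      i = j * (d : ℤ) - (r : ℤ) → G i = F j * I ^ r + F (j - 1)) :
    -- `G` is a length-`d * n` multiplicative filtration by ideals
    ((∀ i : ℤ, 0 ≤ i → G i = ⊤) ∧ (∀ i : ℤ, G i ≤ G (i + 1)) ∧
      (∀ i j : ℤ, G i * G j ≤ G (i + j)) ∧ G (-((d * n : ℕ) : ℤ)) = ⊥) ∧
    -- `G` is a `d`-refinement of `F`
    (∀ i : ℤ, G ((d : ℤ) * i) = F i) ∧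
    -- moreover, if `F (-1) ⊆ I`, then `G (-1) = I`
    (F (-1) ≤ I → G (-1) = I) := by
  replace hFmono : Monotone F := monotone_int_of_le_succ hFmono
  have hGrefine := refinement_natCast_mul hFmono hFtop hd hGtop hGneg
  refine ⟨⟨hGtop, refinement_le_succ hFmono hd hGtop hGneg,
    refinement_mul_le_s9 hFmono hFmul hI hd hGtop hGneg, ?_⟩, hGrefine, fun hFI => ?_⟩
  · rw [Nat.cast_mul, ← mul_neg, hGrefine, hFbot]
  rcases hd.eq_or_lt with rfl | hd
  · have hG := hGrefine (-1)
    rw [Nat.cast_one, one_mul] at hG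
    exact hG.trans (le_antisymm hFI (by simpa using hI))
  · rw [hGneg (-1) (by norm_num) 0 1 le_rfl (by omega) (by simp), hFtop 0 le_rfl, pow_one,
      Ideal.top_mul, zero_sub]
    exact sup_eq_left.mpr hFI

theorem stmt9 {R : Type*} [CommRing R] (n d : ℕ) (hn : 1 ≤ n) (hd : 1 ≤ d)
    (F : ℤ → Ideal R)
    (hFtop : ∀ i : ℤ, 0 ≤ i → F i = ⊤)
    (hFmono : ∀ i : ℤ, F i ≤ F (i + 1))
    (hFmul : ∀ i j : ℤ, F i * F j ≤ F (i + j))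
    (hFbot : F (-(n : ℤ)) = ⊥)
    (I : Ideal R) (hI : I ^ d ≤ F (-1))
    (G : ℤ → Ideal R)
    -- `G i = R` for `i ≥ 0`
    (hGtop : ∀ i : ℤ, 0 ≤ i → G i = ⊤)
    -- for `i < 0`, writing `i = j * d - r` with the unique `j ≤ 0` and `0 ≤ r < d`,
    -- we have `G i = F j * I ^ r + F (j - 1)`
    (hGneg : ∀ i : ℤ, i < 0 → ∀ (j : ℤ) (r : ℕ), j ≤ 0 → (r : ℤ) < (d : ℤ) →
      i = j * (d : ℤ) - (r : ℤ) → G i = F j * I ^ r + F (j - 1)) :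
    -- `G` is a length-`d * n` multiplicative filtration by ideals
    ((∀ i : ℤ, 0 ≤ i → G i = ⊤) ∧ (∀ i : ℤ, G i ≤ G (i + 1)) ∧
      (∀ i j : ℤ, G i * G j ≤ G (i + j)) ∧ G (-((d * n : ℕ) : ℤ)) = ⊥) ∧
    -- `G` is a `d`-refinement of `F`
    (∀ i : ℤ, G ((d : ℤ) * i) = F i) ∧
    -- moreover, if `F (-1) ⊆ I`, then `G (-1) = I`
    (F (-1) ≤ I → G (-1) = I) :=
  stmt9_general n d hd F hFtop hFmono hFmul hFbot I hI G hGtop hGneg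
end
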